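/- Assume (H_c). Fix σ ≥ σ_s and u₀ ∈ (0,1), and define 𝒢_σ(u) := ∫_{u₀}^u ℋ(δ,𝒱_σ(δ)) dδ for u ∈ (0,1). Then 𝒢_σ is a nondecreasing C¹ function on (0,1) with 𝒢_σ(u) → −∞ as u → 0⁺ and 𝒢_σ(u) → +∞ as u → 1⁻; moreover the set of critical levels S_σ := {ξ ∈ ℝ : there exists u ∈ (0,1) with 𝒢_σ(u) = ξ and 𝒢_σ'(u) = 0} is compact. -/

import Mathlib

open Set Filter Topology
open scoped ENNReal

noncomputable section

/-- The strip `Ω` between `-ω` and `ω` over `[0,1]`: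
`Ω = {(u,s) : u ∈ [0,1], -ω(u) < s < ω(u)}`. -/
def OmegaSet (ω : ℝ → ℝ≥0∞) : Set (ℝ × ℝ) :=
  {p | p.1 ∈ Set.Icc (0:ℝ) 1 ∧ ENNReal.ofReal |p.2| < ω p.1}

/-- The set `𝒟` between `a₋ = -a₊` and `a₊` over `[0,1]`. -/
def DSet (aplus : ℝ → ℝ≥0∞) : Set (ℝ × ℝ) :=
  {p | p.1 ∈ Set.Icc (0:ℝ) 1 ∧ ENNReal.ofReal |p.2| < aplus p.1}

/-- Standing data and hypotheses: a lower semicontinuous width `ω : [0,1] → (0,∞]`,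
a regular flux `a` on `Ω` (odd in `s`, C¹, with `∂a/∂s > 0`), the maximal fluxes
`a₊(u) = lim_{s→ω(u)⁻} a(u,s)` (equivalently, the supremum over `0 < s < ω(u)`),
which are `+∞` whenever `ω(u) < ∞`, the partial inverse `g` on `𝒟` defined by
`a(u, g(u,v)) = v`, and a logistic-type reaction term `f`. -/
structure FluxData where
  ω : ℝ → ℝ≥0∞
  a : ℝ → ℝ → ℝ
  aplus : ℝ → ℝ≥0∞
  g : ℝ → ℝ → ℝ
  f : ℝ → ℝ
  ω_pos : ∀ u ∈ Set.Icc (0:ℝ) 1, 0 < ω u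
  ω_lsc : LowerSemicontinuousOn ω (Set.Icc (0:ℝ) 1)
  a_odd : ∀ u s, (u, s) ∈ OmegaSet ω → a u (-s) = - a u s
  a_C1 : ContDiffOn ℝ 1 (fun p : ℝ × ℝ => a p.1 p.2) (OmegaSet ω)
  a_deriv_pos : ∀ u s, (u, s) ∈ OmegaSet ω → ∃ d : ℝ, 0 < d ∧ HasDerivAt (a u) d s
  aplus_def : ∀ u ∈ Set.Icc (0:ℝ) 1,
      aplus u = ⨆ s ∈ {s : ℝ | 0 < s ∧ (u, s) ∈ OmegaSet ω}, ENNReal.ofReal (a u s)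
  aplus_pos : ∀ u ∈ Set.Icc (0:ℝ) 1, 0 < aplus u
  aplus_top : ∀ u ∈ Set.Icc (0:ℝ) 1, ω u < ⊤ → aplus u = ⊤
  g_spec : ∀ p ∈ DSet aplus, (p.1, g p.1 p.2) ∈ OmegaSet ω ∧ a p.1 (g p.1 p.2) = p.2
  f_C1 : ContDiffOn ℝ 1 f (Set.Icc (0:ℝ) 1)
  f_zero : f 0 = 0
  f_one : f 1 = 0
  f_pos : ∀ u ∈ Set.Ioo (0:ℝ) 1, 0 < f u

/-- A classic traveling wave of `u_t = (b(u,u_x))_x + f(u)` moving at speed `σ`: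
a C² increasing profile `u` with values in `(0,1)`, `0 < u' < ω(u)`, connecting
`0` at `-∞` to `1` at `+∞`, such that `ξ ↦ b(u(ξ),u'(ξ))` is differentiable and
`(b(u,u'))' - σ u' + f(u) = 0`. -/
def IsClassicTW (F : FluxData) (b : ℝ → ℝ → ℝ) (σ : ℝ) (u : ℝ → ℝ) : Prop :=
  ContDiff ℝ 2 u ∧
  (∀ ξ : ℝ, u ξ ∈ Set.Ioo (0:ℝ) 1) ∧
  (∀ ξ : ℝ, 0 < deriv u ξ ∧ ENNReal.ofReal (deriv u ξ) < F.ω (u ξ)) ∧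
  Filter.Tendsto u Filter.atBot (nhds 0) ∧
  Filter.Tendsto u Filter.atTop (nhds 1) ∧
  (∀ ξ : ℝ, HasDerivAt (fun t => b (u t) (deriv u t)) (σ * deriv u ξ - F.f (u ξ)) ξ)

/-- A right solution with speed `σ`: `V : (α,1] → ℝ`, continuous on `(α,1]`,
C¹ on `(α,1)`, `V(1) = 0`, and on `(α,1)` : `V > 0`, `(u,V(u)) ∈ 𝒟` and
`V' = σ - f(u)/g(u,V(u))`. -/
def IsRightSolution (F : FluxData) (σ α : ℝ) (V : ℝ → ℝ) : Prop :=
  α ∈ Set.Ico (0:ℝ) 1 ∧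
  ContinuousOn V (Set.Ioc α 1) ∧
  V 1 = 0 ∧
  ∀ u ∈ Set.Ioo α 1, 0 < V u ∧ (u, V u) ∈ DSet F.aplus ∧
    HasDerivAt V (σ - F.f u / F.g u (V u)) u

open Classical in
/-- `ℋ(u,V) = 1/g(u,V)` if `0 < V < a₊(u)`, and `0` if `V ≥ a₊(u)`. -/
def Hfun (F : FluxData) (u V : ℝ) : ℝ :=
  if ENNReal.ofReal V < F.aplus u then 1 / F.g u V else 0

/-- The solution `𝒱_σ` of the extended problem: continuous on `[0,1]`, C¹ on `(0,1)`,
`𝒱(1) = 0`, `𝒱 > 0` on `(0,1)` and `𝒱' = σ - f(u)·ℋ(u,𝒱(u))` on `(0,1)`. -/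
def IsVsol (F : FluxData) (σ : ℝ) (V : ℝ → ℝ) : Prop :=
  ContinuousOn V (Set.Icc (0:ℝ) 1) ∧ V 1 = 0 ∧
  (∀ u ∈ Set.Ioo (0:ℝ) 1, 0 < V u) ∧
  (∀ u ∈ Set.Ioo (0:ℝ) 1, HasDerivAt V (σ - F.f u * Hfun F u (V u)) u)

/-!
`𝒢_σ' = ℋ(u, 𝒱_σ(u)) ≥ 0`, and `ℋ(·, 𝒱_σ(·))` is continuous on `(0,1)` under (H_c): where
`𝒱_σ < a₊` it equals `1/g`, and `g` is continuous because `a(u, ·)` is strictly increasing; where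
`𝒱_σ(u) = a₊(u)` we must have `ω(u) = ∞`, so `g(t, 𝒱_σ(t)) → ∞` as `t → u`.

By comparison, a larger speed gives a smaller solution and `𝒱_τ(0) ≤ 𝒱_σ(0) + (σ - τ)` for `τ ≤ σ`;
together these force `𝒱_σ(0) = 0` for every `σ ≥ σ_s`.

Near `s = 0`, `∂a/∂s` is bounded above and below on a compact box, so `ℋ(t, v) ≍ 1/v` for small
`v`. Near `0` we have `𝒱_σ(t) ≤ σ t`, and near `1` an energy estimate gives
`𝒱_σ(t) ≤ C (1 - t)`. Hence `ℋ ≥ c/t` and `ℋ ≥ c/(1-t)` at the two ends, so `𝒢_σ` diverges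
logarithmically. The same bounds keep the zeros of `ℋ(·, 𝒱_σ(·))`, i.e. the critical points,
inside a compact subinterval of `(0,1)`.
-/

lemma hasDerivAt_intervalIntegral_of_continuousOn {h : ℝ → ℝ} {a b u₀ u : ℝ}
    (hh : ContinuousOn h (Ioo a b)) (hu₀ : u₀ ∈ Ioo a b) (hu : u ∈ Ioo a b) :
    HasDerivAt (fun v => ∫ t in u₀..v, h t) (h u) u :=
  intervalIntegral.integral_hasDerivAt_right
    (hh.mono (ordConnected_Ioo.uIcc_subset hu₀ hu)).intervalIntegrable
    (hh.stronglyMeasurableAtFilter isOpen_Ioo u hu) (hh.continuousAt (isOpen_Ioo.mem_nhds hu))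

lemma contDiffOn_one_of_hasDerivAt {f f' : ℝ → ℝ} {s : Set ℝ} (hs : IsOpen s)
    (hf : ∀ x ∈ s, HasDerivAt f (f' x) x) (hf' : ContinuousOn f' s) : ContDiffOn ℝ 1 f s := by
  rw [show (1 : WithTop ℕ∞) = 0 + 1 from rfl, contDiffOn_succ_iff_deriv_of_isOpen hs]
  refine ⟨fun x hx => (hf x hx).differentiableAt.differentiableWithinAt, by simp, ?_⟩
  exact contDiffOn_zero.2 (hf'.congr fun x hx => (hf x hx).deriv)

lemma monotoneOn_Ioo_of_hasDerivAt_nonneg {f f' : ℝ → ℝ} {a b : ℝ}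
    (hf : ∀ x ∈ Ioo a b, HasDerivAt f (f' x) x) (hf' : ∀ x ∈ Ioo a b, 0 ≤ f' x) :
    MonotoneOn f (Ioo a b) :=
  monotoneOn_of_hasDerivWithinAt_nonneg (convex_Ioo a b)
    (fun x hx => (hf x hx).continuousAt.continuousWithinAt)
    (by simpa only [interior_Ioo] using fun x hx => (hf x hx).hasDerivWithinAt)
    (by simpa only [interior_Ioo] using hf')

lemma nonpos_of_hasDerivAt_nonneg_of_pos {d d' : ℝ → ℝ} {a b : ℝ} (hab : a ≤ b)
    (hd : ContinuousOn d (Icc a b)) (hdb : d b ≤ 0)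
    (hder : ∀ x ∈ Ioo a b, HasDerivAt d (d' x) x)
    (hpos : ∀ x ∈ Ioo a b, 0 < d x → 0 ≤ d' x) : d a ≤ 0 := by
  by_contra! hda
  set B := {x ∈ Icc a b | d x ≤ 0}
  have hBbdd : BddBelow B := ⟨a, fun x hx => hx.1.1⟩
  have hc : sInf B ∈ B := (hd.preimage_isClosed_of_isClosed isClosed_Icc isClosed_Iic).csInf_mem
    ⟨b, right_mem_Icc.2 hab, hdb⟩ hBbdd
  have hac : a < sInf B := lt_of_le_of_ne hc.1.1 fun h => by linarith [h ▸ hc.2]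
  have hpos' : ∀ x ∈ Ioo a (sInf B), 0 < d x := fun x hx => by
    by_contra! h
    exact (csInf_le hBbdd ⟨⟨hx.1.le, hx.2.le.trans hc.1.2⟩, h⟩).not_gt hx.2
  have hsub : Ioo a (sInf B) ⊆ Ioo a b := Ioo_subset_Ioo_right hc.1.2
  have hmono : MonotoneOn d (Icc a (sInf B)) :=
    monotoneOn_of_hasDerivWithinAt_nonneg (convex_Icc _ _) (hd.mono (Icc_subset_Icc_right hc.1.2))
      (by simpa only [interior_Icc] using fun x hx => (hder x (hsub hx)).hasDerivWithinAt)
      (by simpa only [interior_Icc] using fun x hx => hpos x (hsub hx) (hpos' x hx))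
  linarith [hmono (left_mem_Icc.2 hac.le) (right_mem_Icc.2 hac.le) hac.le, hc.2]

lemma sq_le_of_neg_mul_le_mul_deriv {z z' : ℝ → ℝ} {b e K : ℝ} (hbe : b ≤ e)
    (hz : ContinuousOn z (Icc b e)) (hze : z e = 0)
    (hder : ∀ t ∈ Ioo b e, HasDerivAt z (z' t) t)
    (hK : ∀ t ∈ Ioo b e, -(K * (e - t)) ≤ z t * z' t) :
    ∀ t ∈ Icc b e, z t ^ 2 ≤ K * (e - t) ^ 2 := by
  have hmono : MonotoneOn (fun t => z t ^ 2 - K * (e - t) ^ 2) (Icc b e) := by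
    refine monotoneOn_of_hasDerivWithinAt_nonneg (f' := fun t => 2 * (z t * z' t + K * (e - t)))
      (convex_Icc b e) ((hz.pow 2).sub (by fun_prop)) ?_ ?_ <;> rw [interior_Icc]
    · intro t ht
      refine (((hder t ht).fun_pow 2).fun_sub (((hasDerivAt_id' t).const_sub e).fun_pow 2
        |>.const_mul K)).hasDerivWithinAt.congr_deriv ?_
      ring
    · intro t ht
      linarith [hK t ht]
  intro t ht
  have := hmono ht (right_mem_Icc.2 hbe) ht.2
  simp only [hze, sub_self] at this
  linarith

lemma mul_le_and_le_mul_of_hasDerivAt {f f' : ℝ → ℝ} {b m M : ℝ} (hf0 : f 0 = 0)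
    (hf : ∀ s ∈ Icc 0 b, HasDerivAt f (f' s) s) (hf' : ∀ s ∈ Icc 0 b, m ≤ f' s ∧ f' s ≤ M) :
    ∀ s ∈ Icc 0 b, m * s ≤ f s ∧ f s ≤ M * s := by
  have hc : ContinuousOn f (Icc 0 b) := fun s hs => (hf s hs).continuousAt.continuousWithinAt
  have hlin : ∀ c s : ℝ, HasDerivAt (fun s => c * s) c s := fun c s =>
    ((hasDerivAt_id' s).const_mul c).congr_deriv (mul_one c)
  have h₁ : MonotoneOn (fun s => f s - m * s) (Icc 0 b) :=
    monotoneOn_of_hasDerivWithinAt_nonneg (f' := fun s => f' s - m) (convex_Icc 0 b)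
      (hc.sub (continuousOn_const.mul continuousOn_id))
      (fun s hs => ((hf s (interior_subset hs)).fun_sub (hlin m s)).hasDerivWithinAt)
      (fun s hs => sub_nonneg.2 (hf' s (interior_subset hs)).1)
  have h₂ : MonotoneOn (fun s => M * s - f s) (Icc 0 b) :=
    monotoneOn_of_hasDerivWithinAt_nonneg (f' := fun s => M - f' s) (convex_Icc 0 b)
      ((continuousOn_const.mul continuousOn_id).sub hc)
      (fun s hs => ((hlin M s).fun_sub (hf s (interior_subset hs))).hasDerivWithinAt)
      (fun s hs => sub_nonneg.2 (hf' s (interior_subset hs)).2)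
  intro s hs
  have h0 : (0:ℝ) ∈ Icc 0 b := left_mem_Icc.2 (hs.1.trans hs.2)
  have e₁ := h₁ h0 hs hs.1
  have e₂ := h₂ h0 hs hs.1
  simp only [hf0, mul_zero, sub_zero] at e₁ e₂
  constructor <;> linarith

lemma tendsto_nhdsGT_zero_atBot_of_div_le_deriv {G h : ℝ → ℝ} {c : ℝ} (hc : 0 < c)
    (hG : ∀ᶠ t in 𝓝[>] 0, HasDerivAt G (h t) t) (hh : ∀ᶠ t in 𝓝[>] 0, c / t ≤ h t) :
    Tendsto G (𝓝[>] 0) atBot := by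
  obtain ⟨b, hb, hbG⟩ := mem_nhdsGT_iff_exists_Ioo_subset.1 (hG.and hh)
  have hmono : MonotoneOn (fun t => G t - c * Real.log t) (Ioo 0 b) := by
    refine monotoneOn_Ioo_of_hasDerivAt_nonneg (f' := fun t => h t - c * t⁻¹)
      (fun t ht => (hbG ht).1.sub ((Real.hasDerivAt_log ht.1.ne').const_mul c)) fun t ht => ?_
    linarith [(hbG ht).2, div_eq_mul_inv c t]
  have hb2 : b / 2 ∈ Ioo 0 b := ⟨half_pos hb, half_lt_self hb⟩
  refine tendsto_atBot_mono' _ ?_ (tendsto_atBot_add_const_left _ (G (b / 2) - c * Real.log (b / 2))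
    (Real.tendsto_log_nhdsGT_zero.const_mul_atBot hc))
  filter_upwards [Ioo_mem_nhdsGT hb2.1] with t ht
  linarith [hmono ⟨ht.1, ht.2.trans hb2.2⟩ hb2 ht.2.le]

lemma tendsto_nhdsLT_one_atTop_of_div_le_deriv {G h : ℝ → ℝ} {c : ℝ} (hc : 0 < c)
    (hG : ∀ᶠ t in 𝓝[<] 1, HasDerivAt G (h t) t) (hh : ∀ᶠ t in 𝓝[<] 1, c / (1 - t) ≤ h t) :
    Tendsto G (𝓝[<] 1) atTop := by
  obtain ⟨b, hb, hbG⟩ := mem_nhdsLT_iff_exists_Ioo_subset.1 (hG.and hh)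
  have hmono : MonotoneOn (fun t => G t + c * Real.log (1 - t)) (Ioo b 1) := by
    refine monotoneOn_Ioo_of_hasDerivAt_nonneg (f' := fun t => h t + c * ((-1) / (1 - t)))
      (fun t ht => (hbG ht).1.add (((hasDerivAt_id t).const_sub 1).log
        (sub_pos.2 ht.2).ne' |>.const_mul c)) fun t ht => ?_
    linarith [(hbG ht).2, show c * ((-1) / (1 - t)) = -(c / (1 - t)) by ring]
  have hb2 : (b + 1) / 2 ∈ Ioo b 1 := ⟨by linarith [mem_Iio.1 hb], by linarith [mem_Iio.1 hb]⟩
  have hlog : Tendsto (fun t => Real.log (1 - t)) (𝓝[<] 1) atBot := by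
    refine Real.tendsto_log_nhdsGT_zero.comp (tendsto_nhdsWithin_iff.2 ⟨?_, ?_⟩)
    · exact ((continuous_const.sub continuous_id).tendsto' 1 0 (sub_self 1)).mono_left
        nhdsWithin_le_nhds
    · filter_upwards [self_mem_nhdsWithin] with t (ht : t < 1) using sub_pos.2 ht
  refine tendsto_atTop_mono' _ ?_ (tendsto_atTop_add_const_left _
    (G ((b + 1) / 2) + c * Real.log (1 - (b + 1) / 2))
    (tendsto_neg_atBot_atTop.comp (hlog.const_mul_atBot hc)))
  filter_upwards [Ioo_mem_nhdsLT hb2.2] with t ht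
  have := hmono hb2 ⟨hb2.1.trans ht.1, ht.2⟩ ht.1.le
  simp only [Function.comp_apply] at this ⊢
  linarith

lemma setOf_critical_values_eq_image {G h : ℝ → ℝ} {s : Set ℝ}
    (hG : ∀ u ∈ s, HasDerivAt G (h u) u) :
    {ξ : ℝ | ∃ u ∈ s, G u = ξ ∧ deriv G u = 0} = G '' {u ∈ s | h u = 0} := by
  ext ξ
  constructor
  · rintro ⟨u, hu, rfl, hu0⟩
    exact ⟨u, ⟨hu, (hG u hu).deriv ▸ hu0⟩, rfl⟩
  · rintro ⟨u, ⟨hu, hu0⟩, rfl⟩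
    exact ⟨u, hu, rfl, (hG u hu).deriv ▸ hu0⟩

lemma isCompact_setOf_eq_zero_of_eventually_pos {h : ℝ → ℝ} {a b : ℝ} (hab : a < b)
    (hh : ContinuousOn h (Ioo a b)) (ha : ∀ᶠ t in 𝓝[>] a, 0 < h t)
    (hb : ∀ᶠ t in 𝓝[<] b, 0 < h t) : IsCompact {u ∈ Ioo a b | h u = 0} := by
  obtain ⟨a', ha', ha'h⟩ := mem_nhdsGT_iff_exists_Ioo_subset.1 ha
  obtain ⟨b', hb', hb'h⟩ := mem_nhdsLT_iff_exists_Ioo_subset.1 hb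
  set I := Icc (min a' ((a + b) / 2)) (max b' ((a + b) / 2))
  have hsub : I ⊆ Ioo a b :=
    Icc_subset_Ioo (lt_min ha' (by linarith)) (max_lt hb' (by linarith))
  have heq : {u ∈ Ioo a b | h u = 0} = I ∩ h ⁻¹' {0} := by
    ext u
    refine ⟨fun ⟨hu, hu0⟩ => ⟨⟨not_lt.1 fun hlt => ?_, not_lt.1 fun hlt => ?_⟩, hu0⟩,
      fun ⟨hu, hu0⟩ => ⟨hsub hu, hu0⟩⟩
    · exact (ha'h ⟨hu.1, hlt.trans_le (min_le_left _ _)⟩).ne' hu0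
    · exact (hb'h ⟨(le_max_left _ _).trans_lt hlt, hu.2⟩).ne' hu0
  rw [heq]
  exact isCompact_Icc.of_isClosed_subset
    ((hh.mono hsub).preimage_isClosed_of_isClosed isClosed_Icc isClosed_singleton)
    inter_subset_left

namespace FluxData

variable (F : FluxData)

def slice (u : ℝ) : Set ℝ := {s | ENNReal.ofReal |s| < F.ω u}

lemma isOpen_slice (u : ℝ) : IsOpen (F.slice u) :=
  (ENNReal.continuous_ofReal.comp continuous_abs).isOpen_preimage _ isOpen_Iio

lemma convex_slice (u : ℝ) : Convex ℝ (F.slice u) :=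
  (ordConnected_iff.2 fun _ hx _ hy _ _ hz =>
    (ENNReal.ofReal_le_ofReal (abs_le_max_abs_abs hz.1 hz.2)).trans_lt
      (by rw [ENNReal.ofReal_max]; exact max_lt hx hy)).convex

lemma zero_mem_slice {u : ℝ} (hu : u ∈ Icc (0:ℝ) 1) : (0:ℝ) ∈ F.slice u := by
  simpa [slice] using F.ω_pos u hu

lemma a_zero {u : ℝ} (hu : u ∈ Icc (0:ℝ) 1) : F.a u 0 = 0 := by
  linarith [neg_zero (G := ℝ) ▸ F.a_odd u 0 ⟨hu, F.zero_mem_slice hu⟩]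

lemma strictMonoOn_a {u : ℝ} (hu : u ∈ Icc (0:ℝ) 1) : StrictMonoOn (F.a u) (F.slice u) := by
  have hderiv : ∀ s ∈ F.slice u, ∃ d, 0 < d ∧ HasDerivAt (F.a u) d s :=
    fun s hs => F.a_deriv_pos u s ⟨hu, hs⟩
  refine strictMonoOn_of_deriv_pos (F.convex_slice u)
    (fun s hs => (hderiv s hs).choose_spec.2.continuousAt.continuousWithinAt) fun s hs => ?_
  rw [(F.isOpen_slice u).interior_eq] at hs
  obtain ⟨d, hd, hds⟩ := hderiv s hs
  rwa [hds.deriv]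

lemma ofReal_a_lt_aplus {u s : ℝ} (hu : u ∈ Icc (0:ℝ) 1) (hs0 : 0 < s) (hs : s ∈ F.slice u) :
    ENNReal.ofReal (F.a u s) < F.aplus u := by
  have hnear : ∀ᶠ x in 𝓝[>] s, x ∈ F.slice u ∧ s < x :=
    (eventually_nhdsWithin_of_eventually_nhds ((F.isOpen_slice u).mem_nhds hs)).and
      self_mem_nhdsWithin
  obtain ⟨s', hs', hss'⟩ := hnear.exists
  have ha : F.a u s < F.a u s' := F.strictMonoOn_a hu hs hs' hss'
  have ha' : 0 < F.a u s' :=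
    F.a_zero hu ▸ F.strictMonoOn_a hu (F.zero_mem_slice hu) hs' (hs0.trans hss')
  calc ENNReal.ofReal (F.a u s) < ENNReal.ofReal (F.a u s') :=
        (ENNReal.ofReal_lt_ofReal_iff ha').2 ha
    _ ≤ F.aplus u := by
      rw [F.aplus_def u hu]
      exact le_iSup₂_of_le (f := fun s _ => ENNReal.ofReal (F.a u s)) s'
        ⟨hs0.trans hss', hu, hs'⟩ le_rfl

lemma g_mem_slice {u V : ℝ} (hu : u ∈ Icc (0:ℝ) 1) (hV : 0 ≤ V)
    (h : ENNReal.ofReal V < F.aplus u) : F.g u V ∈ F.slice u ∧ F.a u (F.g u V) = V := by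
  obtain ⟨h1, h2⟩ := F.g_spec (u, V) ⟨hu, by rwa [abs_of_nonneg hV]⟩
  exact ⟨h1.2, h2⟩

lemma g_pos {u V : ℝ} (hu : u ∈ Icc (0:ℝ) 1) (hV : 0 < V)
    (h : ENNReal.ofReal V < F.aplus u) : 0 < F.g u V := by
  obtain ⟨hg, hag⟩ := F.g_mem_slice hu hV.le h
  exact (F.strictMonoOn_a hu).lt_iff_lt (F.zero_mem_slice hu) hg |>.1 (by rwa [F.a_zero hu, hag])

lemma g_le_g {u V V' : ℝ} (hu : u ∈ Icc (0:ℝ) 1) (hV : 0 ≤ V) (hVV' : V ≤ V')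
    (h' : ENNReal.ofReal V' < F.aplus u) : F.g u V ≤ F.g u V' := by
  obtain ⟨hg, hag⟩ := F.g_mem_slice hu hV ((ENNReal.ofReal_le_ofReal hVV').trans_lt h')
  obtain ⟨hg', hag'⟩ := F.g_mem_slice hu (hV.trans hVV') h'
  exact (F.strictMonoOn_a hu).le_iff_le hg hg' |>.1 (by rwa [hag, hag'])

lemma Hfun_of_lt {u V : ℝ} (h : ENNReal.ofReal V < F.aplus u) : Hfun F u V = 1 / F.g u V :=
  if_pos h

lemma Hfun_of_le {u V : ℝ} (h : F.aplus u ≤ ENNReal.ofReal V) : Hfun F u V = 0 :=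
  if_neg h.not_gt

lemma Hfun_nonneg {u V : ℝ} (hu : u ∈ Icc (0:ℝ) 1) (hV : 0 < V) : 0 ≤ Hfun F u V := by
  rcases lt_or_ge (ENNReal.ofReal V) (F.aplus u) with h | h
  · rw [F.Hfun_of_lt h]
    exact one_div_nonneg.2 (F.g_pos hu hV h).le
  · rw [F.Hfun_of_le h]

lemma Hfun_anti {u V V' : ℝ} (hu : u ∈ Icc (0:ℝ) 1) (hV : 0 < V) (hVV' : V ≤ V') :
    Hfun F u V' ≤ Hfun F u V := by
  rcases lt_or_ge (ENNReal.ofReal V') (F.aplus u) with h' | h'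
  · have h := (ENNReal.ofReal_le_ofReal hVV').trans_lt h'
    rw [F.Hfun_of_lt h, F.Hfun_of_lt h']
    exact one_div_le_one_div_of_le (F.g_pos hu hV h) (F.g_le_g hu hV.le hVV' h')
  · rw [F.Hfun_of_le h']
    exact F.Hfun_nonneg hu hV

lemma eventually_mem_omegaSet {p : ℝ × ℝ} (hp : p ∈ OmegaSet F.ω) :
    ∀ᶠ q in 𝓝 p, q.1 ∈ Icc (0:ℝ) 1 → q ∈ OmegaSet F.ω := by
  obtain ⟨r, -, hpr, hrω⟩ := ENNReal.lt_iff_exists_real_btwn.1 hp.2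
  have hω : ∀ᶠ q in 𝓝 p, q.1 ∈ Icc (0:ℝ) 1 → ENNReal.ofReal r < F.ω q.1 :=
    continuous_fst.continuousAt.eventually (eventually_nhdsWithin_iff.1 (F.ω_lsc p.1 hp.1 _ hrω))
  have hs : ∀ᶠ q in 𝓝 p, ENNReal.ofReal |q.2| < ENNReal.ofReal r :=
    (ENNReal.continuous_ofReal.comp (continuous_abs.comp continuous_snd)).continuousAt.eventually_lt
      continuousAt_const hpr
  filter_upwards [hω, hs] with q hqω hqs hq using ⟨hq, hqs.trans (hqω hq)⟩

lemma uniqueDiffOn_omegaSet : UniqueDiffOn ℝ (OmegaSet F.ω) := fun p hp =>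
  ((uniqueDiffOn_Icc_zero_one.prod uniqueDiffOn_univ) p ⟨hp.1, mem_univ _⟩).mono_nhds
    (nhdsWithin_le_iff.2 (mem_nhdsWithin_iff_eventually.2
      ((F.eventually_mem_omegaSet hp).mono fun _ h hq => h hq.1)))

lemma omegaSet_mem_nhds {u s : ℝ} (hu : u ∈ Ioo (0:ℝ) 1) (hs : s ∈ F.slice u) :
    OmegaSet F.ω ∈ 𝓝 (u, s) := by
  filter_upwards [F.eventually_mem_omegaSet ⟨Ioo_subset_Icc_self hu, hs⟩,
    continuous_fst.continuousAt.preimage_mem_nhds (Icc_mem_nhds hu.1 hu.2)] with q h hq using h hq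

lemma continuousAt_a_left {u s : ℝ} (hu : u ∈ Ioo (0:ℝ) 1) (hs : s ∈ F.slice u) :
    ContinuousAt (fun t => F.a t s) u :=
  ContinuousAt.comp (g := fun q : ℝ × ℝ => F.a q.1 q.2) (f := fun t => (t, s))
    (F.a_C1.continuousOn.continuousAt (F.omegaSet_mem_nhds hu hs))
    (continuousAt_id.prodMk continuousAt_const)

lemma eventually_mem_slice {u s : ℝ} (hu : u ∈ Ioo (0:ℝ) 1) (hs : s ∈ F.slice u) :
    ∀ᶠ t in 𝓝 u, s ∈ F.slice t :=
  nhdsWithin_eq_nhds.2 (Icc_mem_nhds hu.1 hu.2) ▸ F.ω_lsc u (Ioo_subset_Icc_self hu) _ hs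

def aDeriv (p : ℝ × ℝ) : ℝ :=
  fderivWithin ℝ (fun q : ℝ × ℝ => F.a q.1 q.2) (OmegaSet F.ω) p (0, 1)

lemma continuousOn_aDeriv : ContinuousOn F.aDeriv (OmegaSet F.ω) :=
  (F.a_C1.continuousOn_fderivWithin F.uniqueDiffOn_omegaSet le_rfl).clm_apply continuousOn_const

lemma hasDerivAt_aDeriv {p : ℝ × ℝ} (hp : p ∈ OmegaSet F.ω) :
    HasDerivAt (F.a p.1) (F.aDeriv p) p.2 := by
  have hF := ((F.a_C1.differentiableOn one_ne_zero) p hp).hasFDerivWithinAt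
  have hι : HasDerivAt (fun t : ℝ => (p.1, t)) (0, 1) p.2 :=
    (hasDerivAt_const p.2 p.1).prodMk (hasDerivAt_id p.2)
  have hmaps : MapsTo (fun t : ℝ => (p.1, t)) (F.slice p.1) (OmegaSet F.ω) := fun _ ht => ⟨hp.1, ht⟩
  exact (hF.comp_hasDerivWithinAt p.2 hι.hasDerivWithinAt hmaps).hasDerivAt
    ((F.isOpen_slice p.1).mem_nhds hp.2)

lemma aDeriv_pos {p : ℝ × ℝ} (hp : p ∈ OmegaSet F.ω) : 0 < F.aDeriv p := by
  obtain ⟨d, hd, hds⟩ := F.a_deriv_pos p.1 p.2 hp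
  rwa [hds.unique (F.hasDerivAt_aDeriv hp)] at hd

lemma exists_linear_bounds_a {u : ℝ} (hu : u ∈ Icc (0:ℝ) 1) :
    ∃ s₀ > 0, ∃ m M : ℝ, 0 < m ∧ 0 < M ∧ ∀ᶠ t in 𝓝[Icc 0 1] u,
      s₀ ∈ F.slice t ∧ ∀ s ∈ Icc 0 s₀, m * s ≤ F.a t s ∧ F.a t s ≤ M * s := by
  obtain ⟨r, -, hr0, hrω⟩ := ENNReal.lt_iff_exists_real_btwn.1 (F.ω_pos u hu)
  have hr : 0 < r := ENNReal.ofReal_pos.1 hr0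
  obtain ⟨δ, hδ, hδω⟩ := (nhdsWithin_hasBasis Metric.nhds_basis_closedBall _).eventually_iff.1
    (F.ω_lsc u hu _ hrω)
  set B := (Metric.closedBall u δ ∩ Icc (0:ℝ) 1) ×ˢ Icc 0 (r / 2)
  have hBΩ : B ⊆ OmegaSet F.ω := fun q hq => ⟨hq.1.2, lt_trans
    ((ENNReal.ofReal_lt_ofReal_iff hr).2 (by rw [abs_of_nonneg hq.2.1]; linarith [hq.2.2]))
    (hδω hq.1)⟩
  have hB : IsCompact B := ((isCompact_closedBall u δ).inter_right isClosed_Icc).prod isCompact_Icc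
  have hBne : B.Nonempty :=
    ⟨(u, 0), ⟨Metric.mem_closedBall_self hδ.le, hu⟩, left_mem_Icc.2 (half_pos hr).le⟩
  obtain ⟨pm, hpm, hmin⟩ := hB.exists_isMinOn hBne (F.continuousOn_aDeriv.mono hBΩ)
  obtain ⟨pM, hpM, hmax⟩ := hB.exists_isMaxOn hBne (F.continuousOn_aDeriv.mono hBΩ)
  refine ⟨r / 2, half_pos hr, F.aDeriv pm, F.aDeriv pM, F.aDeriv_pos (hBΩ hpm),
    F.aDeriv_pos (hBΩ hpM), ?_⟩
  filter_upwards [inter_mem_nhdsWithin _ (Metric.closedBall_mem_nhds u hδ)] with t ht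
  have hmem : ∀ s ∈ Icc 0 (r / 2), (t, s) ∈ B := fun s hs => ⟨⟨ht.2, ht.1⟩, hs⟩
  refine ⟨(hBΩ (hmem _ (right_mem_Icc.2 (half_pos hr).le))).2, ?_⟩
  exact mul_le_and_le_mul_of_hasDerivAt (F.a_zero ht.1)
    (fun s hs => F.hasDerivAt_aDeriv (hBΩ (hmem s hs)))
    (fun s hs => ⟨hmin (hmem s hs), hmax (hmem s hs)⟩)

lemma exists_Hfun_bounds {u : ℝ} (hu : u ∈ Icc (0:ℝ) 1) :
    ∃ η > 0, ∃ m M : ℝ, 0 < m ∧ 0 < M ∧ ∀ᶠ t in 𝓝[Icc 0 1] u, ∀ v ∈ Ioo 0 η,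
      m / v ≤ Hfun F t v ∧ v * Hfun F t v ≤ M := by
  obtain ⟨s₀, hs₀, m, M, hm, hM, hev⟩ := F.exists_linear_bounds_a hu
  refine ⟨m * s₀, mul_pos hm hs₀, m, M, hm, hM, ?_⟩
  filter_upwards [hev, self_mem_nhdsWithin] with t ⟨hs₀t, hlin⟩ ht v hv
  have has₀ : v < F.a t s₀ := hv.2.trans_le (hlin s₀ (right_mem_Icc.2 hs₀.le)).1
  have hlt : ENNReal.ofReal v < F.aplus t :=
    (ENNReal.ofReal_le_ofReal has₀.le).trans_lt (F.ofReal_a_lt_aplus ht hs₀ hs₀t)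
  obtain ⟨hg, hag⟩ := F.g_mem_slice ht hv.1.le hlt
  have hg0 := F.g_pos ht hv.1 hlt
  have hgs₀ : F.g t v ≤ s₀ :=
    (F.strictMonoOn_a ht).le_iff_le hg hs₀t |>.1 (by rw [hag]; exact has₀.le)
  obtain ⟨h₁, h₂⟩ := hlin _ ⟨hg0.le, hgs₀⟩
  rw [hag] at h₁ h₂
  rw [F.Hfun_of_lt hlt, div_le_div_iff₀ hv.1 hg0, mul_one_div, div_le_iff₀ hg0]
  constructor <;> linarith

lemma eventually_lt_g {z : ℝ → ℝ} {u s : ℝ} (hu : u ∈ Ioo (0:ℝ) 1) (hz : ContinuousAt z u)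
    (hs : s ∈ F.slice u) (hlt : F.a u s < z u) :
    ∀ᶠ t in 𝓝 u, 0 ≤ z t → ENNReal.ofReal (z t) < F.aplus t → s < F.g t (z t) := by
  filter_upwards [Icc_mem_nhds hu.1 hu.2, F.eventually_mem_slice hu hs,
    (F.continuousAt_a_left hu hs).eventually_lt hz hlt] with t ht hst hat hzt hlt'
  obtain ⟨hg, hag⟩ := F.g_mem_slice ht hzt hlt'
  exact (F.strictMonoOn_a ht).lt_iff_lt hst hg |>.1 (by rwa [hag])

lemma eventually_g_lt {z : ℝ → ℝ} {u s : ℝ} (hu : u ∈ Ioo (0:ℝ) 1) (hz : ContinuousAt z u)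
    (hs : s ∈ F.slice u) (hlt : z u < F.a u s) :
    ∀ᶠ t in 𝓝 u, 0 ≤ z t → ENNReal.ofReal (z t) < F.aplus t → F.g t (z t) < s := by
  filter_upwards [Icc_mem_nhds hu.1 hu.2, F.eventually_mem_slice hu hs,
    hz.eventually_lt (F.continuousAt_a_left hu hs) hlt] with t ht hst hat hzt hlt'
  obtain ⟨hg, hag⟩ := F.g_mem_slice ht hzt hlt'
  exact (F.strictMonoOn_a ht).lt_iff_lt hg hst |>.1 (by rwa [hag])

lemma continuousAt_g_comp {z : ℝ → ℝ} {u : ℝ} (hu : u ∈ Ioo (0:ℝ) 1)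
    (hc : ContinuousAt F.aplus u) (hz : ContinuousAt z u) (hz0 : 0 < z u)
    (hlt : ENNReal.ofReal (z u) < F.aplus u) : ContinuousAt (fun t => F.g t (z t)) u := by
  have hu' := Ioo_subset_Icc_self hu
  obtain ⟨hg, hag⟩ := F.g_mem_slice hu' hz0.le hlt
  have hgood : ∀ᶠ t in 𝓝 u, 0 ≤ z t ∧ ENNReal.ofReal (z t) < F.aplus t :=
    ((hz.eventually (lt_mem_nhds hz0)).mono fun _ h => h.le).and
      ((ENNReal.continuous_ofReal.continuousAt.comp hz).eventually_lt hc hlt)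
  have hslice : ∀ᶠ s in 𝓝 (F.g u (z u)), s ∈ F.slice u := (F.isOpen_slice u).mem_nhds hg
  refine tendsto_order.2 ⟨fun s' hs' => ?_, fun s' hs' => ?_⟩
  · obtain ⟨s, hs, hs's, hsg⟩ :=
      ((eventually_nhdsWithin_of_eventually_nhds hslice).and (Ioo_mem_nhdsLT hs')).exists
    have has : F.a u s < z u := by rw [← hag]; exact F.strictMonoOn_a hu' hs hg hsg
    filter_upwards [F.eventually_lt_g hu hz hs has, hgood] with t h ⟨h₁, h₂⟩
    exact hs's.trans (h h₁ h₂)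
  · obtain ⟨s, hs, hgs, hss'⟩ :=
      ((eventually_nhdsWithin_of_eventually_nhds hslice).and (Ioo_mem_nhdsGT hs')).exists
    have has : z u < F.a u s := by rw [← hag]; exact F.strictMonoOn_a hu' hg hs hgs
    filter_upwards [F.eventually_g_lt hu hz hs has, hgood] with t h ⟨h₁, h₂⟩
    exact (h h₁ h₂).trans hss'

/-- `z u = a₊(u) < ∞` forces `ω(u) = ∞`, so `g(t, z t)` blows up as `t → u`. -/
lemma tendsto_Hfun_comp_of_eq {z : ℝ → ℝ} {u : ℝ} (hu : u ∈ Ioo (0:ℝ) 1)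
    (hz : ContinuousAt z u) (hz0 : 0 < z u) (heq : ENNReal.ofReal (z u) = F.aplus u) :
    Tendsto (fun t => Hfun F t (z t)) (𝓝 u) (𝓝 0) := by
  have hu' := Ioo_subset_Icc_self hu
  have hω : F.ω u = ⊤ := by
    by_contra h
    exact ENNReal.ofReal_ne_top (heq.trans (F.aplus_top u hu' (lt_top_iff_ne_top.2 h)))
  have hpos : ∀ᶠ t in 𝓝 u, 0 < z t := hz.eventually (lt_mem_nhds hz0)
  refine tendsto_order.2 ⟨fun ε hε => ?_, fun ε hε => ?_⟩
  · filter_upwards [hpos, Icc_mem_nhds hu.1 hu.2] with t h ht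
    exact hε.trans_le (F.Hfun_nonneg ht h)
  · have hb : ε⁻¹ ∈ F.slice u := by simp [slice, hω]
    have hab : F.a u ε⁻¹ < z u := by
      have := F.ofReal_a_lt_aplus hu' (inv_pos.2 hε) hb
      rw [← heq] at this
      exact (ENNReal.ofReal_lt_ofReal_iff'.1 this).1
    filter_upwards [F.eventually_lt_g hu hz hb hab, hpos, Icc_mem_nhds hu.1 hu.2] with t h hzt ht
    rcases lt_or_ge (ENNReal.ofReal (z t)) (F.aplus t) with hlt | hle
    · rw [F.Hfun_of_lt hlt, one_div]
      exact inv_lt_of_inv_lt₀ hε (h hzt.le hlt)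
    · rwa [F.Hfun_of_le hle]

lemma continuousOn_Hfun_comp (hc : ContinuousOn F.aplus (Icc 0 1)) {z : ℝ → ℝ}
    (hz : ContinuousOn z (Icc 0 1)) (hpos : ∀ u ∈ Ioo (0:ℝ) 1, 0 < z u) :
    ContinuousOn (fun t => Hfun F t (z t)) (Ioo 0 1) := by
  intro u hu
  have hIcc : Icc (0:ℝ) 1 ∈ 𝓝 u := Icc_mem_nhds hu.1 hu.2
  have hzu := hz.continuousAt hIcc
  have hcu := hc.continuousAt hIcc
  have hofReal : ContinuousAt (fun t => ENNReal.ofReal (z t)) u :=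
    ENNReal.continuous_ofReal.continuousAt.comp hzu
  refine ContinuousAt.continuousWithinAt ?_
  rcases lt_trichotomy (ENNReal.ofReal (z u)) (F.aplus u) with hlt | heq | hgt
  · have hg0 := F.g_pos (Ioo_subset_Icc_self hu) (hpos u hu) hlt
    refine (continuousAt_const.div (f := fun _ => (1:ℝ))
      (F.continuousAt_g_comp hu hcu hzu (hpos u hu) hlt) hg0.ne').congr ?_
    filter_upwards [hofReal.eventually_lt hcu hlt] with t ht using (F.Hfun_of_lt ht).symm
  · rw [ContinuousAt, F.Hfun_of_le heq.ge]
    exact F.tendsto_Hfun_comp_of_eq hu hzu (hpos u hu) heq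
  · refine (continuousAt_const (y := (0:ℝ))).congr ?_
    filter_upwards [hcu.eventually_lt hofReal hgt] with t ht using (F.Hfun_of_le ht.le).symm

lemma exists_f_le_mul_one_sub : ∃ L > 0, ∀ t ∈ Icc (0:ℝ) 1, F.f t ≤ L * (1 - t) := by
  obtain ⟨K, hK⟩ := F.f_C1.exists_lipschitzOnWith one_ne_zero (convex_Icc 0 1) isCompact_Icc
  refine ⟨K + 1, by positivity, fun t ht => ?_⟩
  have h := hK.dist_le_mul t ht 1 (right_mem_Icc.2 zero_le_one)
  rw [F.f_one, Real.dist_eq, Real.dist_eq, sub_zero, abs_sub_comm t,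
    abs_of_nonneg (sub_nonneg.2 ht.2)] at h
  nlinarith [le_abs_self (F.f t), sub_nonneg.2 ht.2]

end FluxData

namespace IsVsol

variable {F : FluxData} {σ : ℝ} {V : ℝ → ℝ}

lemma nonneg (hV : IsVsol F σ V) : ∀ u ∈ Icc (0:ℝ) 1, 0 ≤ V u := by
  rw [← closure_Ioo (zero_ne_one' ℝ)]
  exact le_on_closure (fun u hu => (hV.2.2.1 u hu).le) continuousOn_const
    (closure_Ioo (zero_ne_one' ℝ) ▸ hV.1)

lemma le_of_le_speed {τ : ℝ} {W : ℝ → ℝ} (hτσ : τ ≤ σ) (hV : IsVsol F σ V)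
    (hW : IsVsol F τ W) : ∀ u ∈ Icc (0:ℝ) 1, V u ≤ W u := by
  have hIoo : ∀ u ∈ Ioo (0:ℝ) 1, V u ≤ W u := by
    intro u hu
    have hsub : Ioo u 1 ⊆ Ioo 0 1 := Ioo_subset_Ioo_left hu.1.le
    refine sub_nonpos.1 (nonpos_of_hasDerivAt_nonneg_of_pos (d := fun x => V x - W x) hu.2.le
      ((hV.1.sub hW.1).mono (Icc_subset_Icc_left hu.1.le)) (by simp [hV.2.1, hW.2.1])
      (fun x hx => (hV.2.2.2 x (hsub hx)).sub (hW.2.2.2 x (hsub hx))) fun x hx hd => ?_)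
    have hx := hsub hx
    have hH := F.Hfun_anti (Ioo_subset_Icc_self hx) (hW.2.2.1 x hx) (sub_pos.1 hd).le
    nlinarith [F.f_pos x hx]
  rw [← closure_Ioo (zero_ne_one' ℝ)]
  exact le_on_closure hIoo (closure_Ioo (zero_ne_one' ℝ) ▸ hV.1)
    (closure_Ioo (zero_ne_one' ℝ) ▸ hW.1)

lemma apply_zero_le_apply_zero_add {τ : ℝ} {W : ℝ → ℝ} (hτσ : τ ≤ σ) (hV : IsVsol F σ V)
    (hW : IsVsol F τ W) : W 0 ≤ V 0 + (σ - τ) := by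
  have hmono : MonotoneOn (fun x => W x - V x + (σ - τ) * x) (Icc 0 1) := by
    refine monotoneOn_of_hasDerivWithinAt_nonneg
      (f' := fun x => (τ - F.f x * Hfun F x (W x)) - (σ - F.f x * Hfun F x (V x)) + (σ - τ))
      (convex_Icc 0 1) ((hW.1.sub hV.1).add (continuousOn_const.mul continuousOn_id)) ?_ ?_ <;>
      rw [interior_Icc]
    · intro x hx
      exact (((hW.2.2.2 x hx).fun_sub (hV.2.2.2 x hx)).fun_add
        (((hasDerivAt_id' x).const_mul (σ - τ)).congr_deriv (mul_one _))).hasDerivWithinAt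
    · intro x hx
      have hH := F.Hfun_anti (Ioo_subset_Icc_self hx) (hV.2.2.1 x hx)
        (hV.le_of_le_speed hτσ hW x (Ioo_subset_Icc_self hx))
      nlinarith [F.f_pos x hx]
  have := hmono (left_mem_Icc.2 zero_le_one) (right_mem_Icc.2 zero_le_one) zero_le_one
  simp only [hV.2.1, hW.2.1, mul_zero, mul_one] at this
  linarith

lemma le_mul_of_apply_zero (hV : IsVsol F σ V) (hV0 : V 0 = 0) :
    ∀ t ∈ Icc (0:ℝ) 1, V t ≤ σ * t := by
  have hmono : MonotoneOn (fun t => σ * t - V t) (Icc 0 1) := by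
    refine monotoneOn_of_hasDerivWithinAt_nonneg (f' := fun t => σ - (σ - F.f t * Hfun F t (V t)))
      (convex_Icc 0 1) ((continuousOn_const.mul continuousOn_id).sub hV.1) ?_ ?_ <;>
      rw [interior_Icc]
    · exact fun t ht => ((((hasDerivAt_id' t).const_mul σ).congr_deriv (mul_one σ)).fun_sub
        (hV.2.2.2 t ht)).hasDerivWithinAt
    · intro t ht
      have := F.Hfun_nonneg (Ioo_subset_Icc_self ht) (hV.2.2.1 t ht)
      nlinarith [F.f_pos t ht]
  intro t ht
  have := hmono (left_mem_Icc.2 zero_le_one) ht ht.1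
  simp only [hV0, mul_zero, sub_zero] at this
  linarith

/-- `V t ≤ σ t`, and `ℋ(t, v) ≥ m / v` for small `v`. -/
lemma exists_div_le_Hfun_near_zero (hV : IsVsol F σ V) (hV0 : V 0 = 0) :
    ∃ c > 0, ∀ᶠ t in 𝓝[>] 0, c / t ≤ Hfun F t (V t) := by
  obtain ⟨η, hη, m, _, hm, -, hb⟩ := F.exists_Hfun_bounds (left_mem_Icc.2 zero_le_one)
  have hlin := hV.le_mul_of_apply_zero hV0
  have hσ : 0 < σ := by
    linarith [hlin (1 / 2) ⟨by norm_num, by norm_num⟩, hV.2.2.1 (1 / 2) ⟨by norm_num, by norm_num⟩]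
  have hle : 𝓝[>] (0:ℝ) ≤ 𝓝[Icc 0 1] 0 := by
    rw [nhdsWithin_Icc_eq_nhdsGE zero_lt_one]
    exact nhdsWithin_mono _ Ioi_subset_Ici_self
  have hsmall : ∀ᶠ t in 𝓝[>] 0, V t < η :=
    ((hV.1 0 (left_mem_Icc.2 zero_le_one)).mono_left hle).eventually (gt_mem_nhds (by rwa [hV0]))
  refine ⟨m / σ, div_pos hm hσ, ?_⟩
  filter_upwards [Ioo_mem_nhdsGT zero_lt_one, hsmall, hle hb] with t ht hVη hbt
  have hVt := hV.2.2.1 t ht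
  calc m / σ / t = m / (σ * t) := div_div _ _ _
    _ ≤ m / V t := div_le_div_of_nonneg_left hm.le hVt (hlin t (Ioo_subset_Icc_self ht))
    _ ≤ Hfun F t (V t) := (hbt (V t) ⟨hVt, hVη⟩).1

/-- With `f ≤ L (1 - t)` and `v ℋ(t, v) ≤ M`, the energy estimate `(V²)' ≥ -2 L M (1 - t)` gives
`V t ≤ √(L M) (1 - t)`, and `ℋ(t, v) ≥ m / v` for small `v`. -/
lemma exists_div_le_Hfun_near_one (hV : IsVsol F σ V) (hσ : 0 ≤ σ) :
    ∃ c > 0, ∀ᶠ t in 𝓝[<] 1, c / (1 - t) ≤ Hfun F t (V t) := by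
  obtain ⟨η, hη, m, M, hm, hM, hb⟩ := F.exists_Hfun_bounds (right_mem_Icc.2 zero_le_one)
  obtain ⟨L, hL, hf⟩ := F.exists_f_le_mul_one_sub
  have hle : 𝓝[<] (1:ℝ) ≤ 𝓝[Icc 0 1] 1 := by
    rw [nhdsWithin_Icc_eq_nhdsLE zero_lt_one]
    exact nhdsWithin_mono _ Iio_subset_Iic_self
  have hsmall : ∀ᶠ t in 𝓝[<] 1, V t < η :=
    ((hV.1 1 (right_mem_Icc.2 zero_le_one)).mono_left hle).eventually
      (gt_mem_nhds (by rwa [hV.2.1]))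
  obtain ⟨δ, hδ, hδsub⟩ := mem_nhdsLT_iff_exists_Ioo_subset.1 (hsmall.and (hle hb))
  set b := max δ 0
  have hb1 : b < 1 := max_lt hδ zero_lt_one
  have hIoo : Ioo b 1 ⊆ Ioo 0 1 := Ioo_subset_Ioo_left (le_max_right _ _)
  have hbd : ∀ t ∈ Ioo b 1, m / V t ≤ Hfun F t (V t) ∧ V t * Hfun F t (V t) ≤ M := fun t ht =>
    (hδsub (Ioo_subset_Ioo_left (le_max_left _ _) ht)).2 (V t)
      ⟨hV.2.2.1 t (hIoo ht), (hδsub (Ioo_subset_Ioo_left (le_max_left _ _) ht)).1⟩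
  have hsq := sq_le_of_neg_mul_le_mul_deriv (z' := fun t => σ - F.f t * Hfun F t (V t))
    (K := L * M) hb1.le (hV.1.mono (Icc_subset_Icc_left (le_max_right _ _))) hV.2.1
    (fun t ht => hV.2.2.2 t (hIoo ht)) fun t ht => by
      have ht' := hIoo ht
      have hVH := mul_nonneg (hV.2.2.1 t ht').le (F.Hfun_nonneg (Ioo_subset_Icc_self ht')
        (hV.2.2.1 t ht'))
      nlinarith [mul_le_mul (hf t (Ioo_subset_Icc_self ht')) (hbd t ht).2 hVH
        (mul_nonneg hL.le (sub_nonneg.2 ht.2.le)), mul_nonneg hσ (hV.2.2.1 t ht').le,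
        F.f_pos t ht']
  refine ⟨m / √(L * M), by positivity, ?_⟩
  filter_upwards [Ioo_mem_nhdsLT hb1] with t ht
  have hVt := hV.2.2.1 t (hIoo ht)
  have hVle : V t ≤ √(L * M) * (1 - t) := by
    calc V t ≤ √(L * M * (1 - t) ^ 2) := (le_abs_self _).trans
          (Real.abs_le_sqrt (hsq t (Ioo_subset_Icc_self ht)))
      _ = √(L * M) * (1 - t) := by
        rw [Real.sqrt_mul' _ (sq_nonneg _), Real.sqrt_sq (sub_nonneg.2 ht.2.le)]
  calc m / √(L * M) / (1 - t) = m / (√(L * M) * (1 - t)) := div_div _ _ _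
    _ ≤ m / V t := div_le_div_of_nonneg_left hm.le hVt hVle
    _ ≤ Hfun F t (V t) := (hbd t ht).1

end IsVsol

lemma vsol_zero_eq_zero_of_sInf_le {F : FluxData} {𝒱 : ℝ → ℝ → ℝ}
    (h𝒱 : ∀ σ : ℝ, 0 ≤ σ → IsVsol F σ (𝒱 σ)) (hne : {σ : ℝ | 0 ≤ σ ∧ 𝒱 σ 0 = 0}.Nonempty)
    {σ : ℝ} (hσ : sInf {σ : ℝ | 0 ≤ σ ∧ 𝒱 σ 0 = 0} ≤ σ) : 𝒱 σ 0 = 0 := by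
  have hσ0 : 0 ≤ σ := (le_csInf hne fun _ h => h.1).trans hσ
  have hV := h𝒱 σ hσ0
  refine le_antisymm (not_lt.1 fun hpos => ?_) (hV.nonneg 0 (left_mem_Icc.2 zero_le_one))
  obtain ⟨σ', ⟨hσ'0, hσ'⟩, hσ'lt⟩ := exists_lt_of_csInf_lt hne (lt_add_of_pos_right _ hpos)
  rcases le_total σ' σ with h | h
  · linarith [hV.le_of_le_speed h (h𝒱 σ' hσ'0) 0 (left_mem_Icc.2 zero_le_one)]
  · linarith [(h𝒱 σ' hσ'0).apply_zero_le_apply_zero_add h hV]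

theorem stmt11 (F : FluxData) (hc : ContinuousOn F.aplus (Set.Icc (0:ℝ) 1))
    (𝒱 : ℝ → ℝ → ℝ) (h𝒱 : ∀ σ : ℝ, 0 ≤ σ → IsVsol F σ (𝒱 σ))
    (σs : ℝ) (hσs : σs = sInf {σ : ℝ | 0 ≤ σ ∧ 𝒱 σ 0 = 0})
    (hne : {σ : ℝ | 0 ≤ σ ∧ 𝒱 σ 0 = 0}.Nonempty)
    (σ : ℝ) (hσ : σs ≤ σ) (u₀ : ℝ) (hu₀ : u₀ ∈ Set.Ioo (0:ℝ) 1)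
    (G : ℝ → ℝ) (hG : ∀ u : ℝ, G u = ∫ t in u₀..u, Hfun F t (𝒱 σ t)) :
    (∀ u ∈ Set.Ioo (0:ℝ) 1, HasDerivAt G (Hfun F u (𝒱 σ u)) u) ∧
    ContDiffOn ℝ 1 G (Set.Ioo (0:ℝ) 1) ∧
    MonotoneOn G (Set.Ioo (0:ℝ) 1) ∧
    Filter.Tendsto G (nhdsWithin 0 (Set.Ioi 0)) Filter.atBot ∧
    Filter.Tendsto G (nhdsWithin 1 (Set.Iio 1)) Filter.atTop ∧
    IsCompact {ξ : ℝ | ∃ u ∈ Set.Ioo (0:ℝ) 1, G u = ξ ∧ deriv G u = 0} := by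
  subst hσs
  have hσ0 : 0 ≤ σ := (le_csInf hne fun _ h => h.1).trans hσ
  have hV := h𝒱 σ hσ0
  set H := fun t => Hfun F t (𝒱 σ t)
  have hHc : ContinuousOn H (Ioo 0 1) := F.continuousOn_Hfun_comp hc hV.1 hV.2.2.1
  have hGd : ∀ u ∈ Ioo (0:ℝ) 1, HasDerivAt G (H u) u := fun u hu =>
    funext hG ▸ hasDerivAt_intervalIntegral_of_continuousOn hHc hu₀ hu
  obtain ⟨c₀, hc₀, h₀⟩ := hV.exists_div_le_Hfun_near_zero (vsol_zero_eq_zero_of_sInf_le h𝒱 hne hσ)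
  obtain ⟨c₁, hc₁, h₁⟩ := hV.exists_div_le_Hfun_near_one hσ0
  refine ⟨hGd, contDiffOn_one_of_hasDerivAt isOpen_Ioo hGd hHc,
    monotoneOn_Ioo_of_hasDerivAt_nonneg hGd fun u hu =>
      F.Hfun_nonneg (Ioo_subset_Icc_self hu) (hV.2.2.1 u hu),
    tendsto_nhdsGT_zero_atBot_of_div_le_deriv hc₀
      (mem_of_superset (Ioo_mem_nhdsGT zero_lt_one) hGd) h₀,
    tendsto_nhdsLT_one_atTop_of_div_le_deriv hc₁
      (mem_of_superset (Ioo_mem_nhdsLT zero_lt_one) hGd) h₁, ?_⟩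
  rw [setOf_critical_values_eq_image hGd]
  refine (isCompact_setOf_eq_zero_of_eventually_pos zero_lt_one hHc ?_ ?_).image_of_continuousOn
    fun u hu => (hGd u hu.1).continuousAt.continuousWithinAt
  · filter_upwards [h₀, self_mem_nhdsWithin] with t ht (ht0 : 0 < t)
    exact (div_pos hc₀ ht0).trans_le ht
  · filter_upwards [h₁, self_mem_nhdsWithin] with t ht (ht1 : t < 1)
    exact (div_pos hc₁ (sub_pos.2 ht1)).trans_le ht
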